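/- If ρ(|A|) < 1 (spectral radius of the componentwise absolute value of A), then every solution x of Ax - |x| = b satisfies |x| ≤ -(I - |A|)^{-1} b componentwise. -/

import Mathlib

open Matrix

/-- Componentwise absolute value of a vector. -/
noncomputable def absv {n : ℕ} (x : Fin n → ℝ) : Fin n → ℝ := fun i => |x i|

/-- Euclidean norm of a vector. -/
noncomputable def enorm₂ {n : ℕ} (x : Fin n → ℝ) : ℝ := Real.sqrt (∑ i, x i ^ 2)

/-- Largest singular value (spectral / operator 2-norm). -/
noncomputable def sigmaMax {n : ℕ} (A : Matrix (Fin n) (Fin n) ℝ) : ℝ :=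
  sSup {r | ∃ x : Fin n → ℝ, enorm₂ x = 1 ∧ r = enorm₂ (A.mulVec x)}

/-- Smallest singular value. -/
noncomputable def sigmaMin {n : ℕ} (A : Matrix (Fin n) (Fin n) ℝ) : ℝ :=
  sInf {r | ∃ x : Fin n → ℝ, enorm₂ x = 1 ∧ r = enorm₂ (A.mulVec x)}

/-- Spectral radius of a real matrix (via its complex spectrum). -/
noncomputable def specRad {n : ℕ} (A : Matrix (Fin n) (Fin n) ℝ) : ENNReal :=
  spectralRadius ℂ (A.map (Complex.ofReal ·))

section Aux

open Filter
open scoped NNReal ENNReal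

attribute [local instance] Matrix.linftyOpNormedRing Matrix.linftyOpNormedAlgebra

/-- Entries of `M ^ k` are nonnegative when entries of `M` are. -/
lemma aux_pow_entry_nonneg {n : ℕ} (M : Matrix (Fin n) (Fin n) ℝ)
    (hM : ∀ i j, 0 ≤ M i j) (k : ℕ) : ∀ i j, 0 ≤ (M ^ k) i j := by
  induction k with
  | zero =>
    intro i j
    simp only [pow_zero, Matrix.one_apply]
    split <;> norm_num
  | succ k ih =>
    intro i j
    rw [pow_succ, Matrix.mul_apply]
    exact Finset.sum_nonneg fun l _ => mul_nonneg (ih i l) (hM l j)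

lemma aux_entry_norm_le {n : ℕ} (A : Matrix (Fin n) (Fin n) ℂ) (i j : Fin n) :
    ‖A i j‖ ≤ ‖A‖ := by
  have hnn : ‖A i j‖₊ ≤ ‖A‖₊ := by
    rw [Matrix.linfty_opNNNorm_def]
    have h1 : ‖A i j‖₊ ≤ ∑ j', ‖A i j'‖₊ :=
      Finset.single_le_sum (f := fun j' => ‖A i j'‖₊) (fun l _ => zero_le) (Finset.mem_univ j)
    exact h1.trans (Finset.le_sup (f := fun i' => ∑ j', ‖A i' j'‖₊) (Finset.mem_univ i))
  exact_mod_cast hnn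

/-- Along a subsequence, powers of a real matrix whose complexification has
spectral radius `< 1` tend entrywise to `0`. -/
lemma aux_pow_tendsto {n : ℕ} (M : Matrix (Fin n) (Fin n) ℝ)
    (hρ : spectralRadius ℂ (M.map (Complex.ofReal ·)) < 1) :
    ∃ N : ℕ, 1 ≤ N ∧ ∀ i j,
      Tendsto (fun q : ℕ => (M ^ (N * q)) i j) atTop (nhds 0) := by
  haveI : CompleteSpace (Matrix (Fin n) (Fin n) ℂ) := FiniteDimensional.complete ℂ _
  set Mc : Matrix (Fin n) (Fin n) ℂ := M.map (Complex.ofReal ·) with hMc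
  have hg := spectrum.pow_nnnorm_pow_one_div_tendsto_nhds_spectralRadius Mc
  have hev := hg.eventually_lt_const hρ
  obtain ⟨N, h1, h2⟩ := (hev.and (eventually_ge_atTop 1)).exists
  have hnormN : ‖Mc ^ N‖ < 1 := by
    by_contra hge
    push_neg at hge
    have hnn : (1:ℝ≥0∞) ≤ (‖Mc ^ N‖₊ : ℝ≥0∞) := by
      rw [ENNReal.one_le_coe_iff]; exact_mod_cast hge
    exact absurd h1 (not_lt.mpr (ENNReal.one_le_rpow hnn (by positivity)))
  refine ⟨N, h2, fun i j => ?_⟩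
  have hBpow : Tendsto (fun q : ℕ => (Mc ^ N) ^ q) atTop (nhds 0) :=
    tendsto_pow_atTop_nhds_zero_of_norm_lt_one hnormN
  have hnorm : Tendsto (fun q : ℕ => ‖(Mc ^ N) ^ q‖) atTop (nhds 0) := by
    have := hBpow.norm
    simpa using this
  have hmapc : ∀ q : ℕ, (Mc ^ N) ^ q = (Complex.ofRealHom.mapMatrix : Matrix (Fin n) (Fin n) ℝ →+* Matrix (Fin n) (Fin n) ℂ) (M ^ (N * q)) := by
    intro q
    rw [map_pow, ← pow_mul]
    rfl
  refine squeeze_zero_norm (fun q => ?_) hnorm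
  have : |(M ^ (N * q)) i j| = ‖((Mc ^ N) ^ q) i j‖ := by
    rw [hmapc q]
    simp [RingHom.mapMatrix_apply, Matrix.map_apply]
  rw [Real.norm_eq_abs, this]
  exact aux_entry_norm_le _ i j

/-- `1 - M` is invertible and its inverse has nonnegative entries. -/
lemma aux_inv_nonneg {n : ℕ} (M : Matrix (Fin n) (Fin n) ℝ)
    (hM : ∀ i j, 0 ≤ M i j)
    (hρ : spectralRadius ℂ (M.map (Complex.ofReal ·)) < 1) :
    IsUnit (1 - M).det ∧ ∀ i j, 0 ≤ (1 - M)⁻¹ i j := by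
  set f : Matrix (Fin n) (Fin n) ℝ →+* Matrix (Fin n) (Fin n) ℂ :=
    Complex.ofRealHom.mapMatrix with hf
  set Mc : Matrix (Fin n) (Fin n) ℂ := M.map (Complex.ofReal ·) with hMc
  -- invertibility
  have hone : (1 : ℂ) ∉ spectrum ℂ Mc := by
    intro hmem
    have : (1 : ℝ≥0∞) ≤ spectralRadius ℂ Mc := by
      have := le_iSup₂ (f := fun (k : ℂ) (_ : k ∈ spectrum ℂ Mc) => (‖k‖₊ : ℝ≥0∞)) 1 hmem
      simpa [spectralRadius] using this
    exact absurd hρ (not_lt.mpr this)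
  have hUc : IsUnit (1 - Mc) := by
    have := spectrum.notMem_iff.mp hone
    simpa [Algebra.algebraMap_eq_smul_one] using this
  have hdetc : IsUnit (1 - Mc).det := (Matrix.isUnit_iff_isUnit_det _).mp hUc
  have hmap1 : f (1 - M) = 1 - Mc := by
    rw [map_sub, _root_.map_one]; rfl
  have hdet : IsUnit (1 - M).det := by
    rw [isUnit_iff_ne_zero]
    intro h0
    have : (1 - Mc).det = 0 := by
      rw [← hmap1, hf, ← RingHom.map_det, h0]
      simp
    rw [this] at hdetc
    exact (by simpa using hdetc : IsUnit (0 : ℂ)).ne_zero rfl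
  refine ⟨hdet, fun i j => ?_⟩
  -- Neumann series argument
  obtain ⟨N, hN1, htend⟩ := aux_pow_tendsto M hρ
  set S : ℕ → Matrix (Fin n) (Fin n) ℝ :=
    fun q => ∑ k ∈ Finset.range (N * q), M ^ k with hS
  have hSid : ∀ q, S q = (1 - M ^ (N * q)) * (1 - M)⁻¹ := by
    intro q
    have hgeom : S q * (M - 1) = M ^ (N * q) - 1 := geom_sum_mul M (N * q)
    have h1 : S q * (1 - M) = 1 - M ^ (N * q) := by
      have : S q * (1 - M) = -(S q * (M - 1)) := by
        rw [← Matrix.mul_neg, neg_sub]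
      rw [this, hgeom, neg_sub]
    calc S q = S q * ((1 - M) * (1 - M)⁻¹) := by
          rw [Matrix.mul_nonsing_inv _ hdet, Matrix.mul_one]
      _ = S q * (1 - M) * (1 - M)⁻¹ := by rw [Matrix.mul_assoc]
      _ = (1 - M ^ (N * q)) * (1 - M)⁻¹ := by rw [h1]
  have hSnonneg : ∀ q, 0 ≤ S q i j := by
    intro q
    rw [hS]
    simp only [Matrix.sum_apply]
    exact Finset.sum_nonneg fun k _ => aux_pow_entry_nonneg M hM k i j
  have hlim : Tendsto (fun q => S q i j) atTop (nhds ((1 - M)⁻¹ i j)) := by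
    have hform : ∀ q, S q i j =
        ∑ l, ((1 : Matrix (Fin n) (Fin n) ℝ) i l - (M ^ (N * q)) i l) * (1 - M)⁻¹ l j := by
      intro q
      rw [hSid q, Matrix.mul_apply]
      congr 1
    have hsum : Tendsto
        (fun q => ∑ l, ((1 : Matrix (Fin n) (Fin n) ℝ) i l - (M ^ (N * q)) i l) * (1 - M)⁻¹ l j)
        atTop (nhds (∑ l, ((1 : Matrix (Fin n) (Fin n) ℝ) i l - 0) * (1 - M)⁻¹ l j)) := by
      refine tendsto_finset_sum _ fun l _ => ?_
      exact ((tendsto_const_nhds.sub (htend i l)).mul tendsto_const_nhds)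
    have heval : (∑ l, ((1 : Matrix (Fin n) (Fin n) ℝ) i l - 0) * (1 - M)⁻¹ l j)
        = (1 - M)⁻¹ i j := by
      simp only [sub_zero]
      rw [← Matrix.mul_apply, Matrix.one_mul]
    rw [← heval]
    simpa only [← hform] using hsum
  exact ge_of_tendsto' hlim hSnonneg

end Aux

theorem stmt1 {n : ℕ} (A : Matrix (Fin n) (Fin n) ℝ) (b : Fin n → ℝ)
    (h : specRad (A.map (fun a => |a|)) < 1)
    (x : Fin n → ℝ) (hx : A.mulVec x - absv x = b) :
    ∀ i, |x i| ≤ (-((1 - A.map (fun a => |a|))⁻¹.mulVec b)) i := by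
  set M : Matrix (Fin n) (Fin n) ℝ := A.map (fun a => |a|) with hMdef
  have hM : ∀ i j, 0 ≤ M i j := fun i j => abs_nonneg _
  have hρ : spectralRadius ℂ (M.map (Complex.ofReal ·)) < 1 := h
  obtain ⟨hdet, hinv⟩ := aux_inv_nonneg M hM hρ
  set y : Fin n → ℝ := absv x with hy
  -- componentwise inequality (1 - M) y ≤ -b
  have hle : ∀ i, ((1 - M).mulVec y) i ≤ -b i := by
    intro i
    have hb : b i = (A.mulVec x) i - |x i| := by
      rw [← hx]; simp [hy, absv]
    have hsub : ((1 - M).mulVec y) i = y i - (M.mulVec y) i := by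
      rw [Matrix.sub_mulVec, Matrix.one_mulVec]; simp
    have hAx : (A.mulVec x) i ≤ (M.mulVec y) i := by
      rw [Matrix.mulVec, Matrix.mulVec, dotProduct, dotProduct]
      refine Finset.sum_le_sum fun j _ => ?_
      calc A i j * x j ≤ |A i j * x j| := le_abs_self _
        _ = |A i j| * |x j| := abs_mul _ _
        _ = M i j * y j := by simp [hMdef, hy, absv, Matrix.map_apply]
    rw [hsub]
    have hyi : y i = |x i| := by simp [hy, absv]
    rw [hyi]
    linarith
  -- u := -b - (1-M) y is nonnegative
  set u : Fin n → ℝ := fun i => -b i - ((1 - M).mulVec y) i with hu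
  have hu0 : ∀ i, 0 ≤ u i := fun i => by simp [hu]; linarith [hle i]
  have hnegb : -b = (1 - M).mulVec y + u := by
    funext i; simp [hu]
  intro i
  have hrw : (-((1 - M)⁻¹.mulVec b)) i = ((1 - M)⁻¹.mulVec (-b)) i := by
    rw [Matrix.mulVec_neg]
  rw [hrw, hnegb, Matrix.mulVec_add, Matrix.mulVec_mulVec,
    Matrix.nonsing_inv_mul _ hdet, Matrix.one_mulVec]
  have hun : 0 ≤ ((1 - M)⁻¹.mulVec u) i := by
    rw [Matrix.mulVec, dotProduct]
    exact Finset.sum_nonneg fun k _ => mul_nonneg (hinv i k) (hu0 k)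
  have hyi : |x i| = y i := by simp [hy, absv]
  rw [hyi]
  simpa using hun
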